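/- arXiv:1304.1255 — 3 statements merged into one kernel-verified Lean document; each statement's English description precedes it below -/
import Mathlib

section
/- Let X be an integrable real random variable and Y an R^d-valued random vector with absolutely continuous distribution. Then E|E[X|Y]| equals the supremum of E[X g(Y)] over all continuously differentiable compactly supported functions g : R^d → R with sup norm at most 1. -/
/-!
Write `E[X|Y] = h(Y)` with `h` measurable. By the pull-out property,
`E[X g(Y)] = E[E[X|Y] g(Y)] = ∫ h g dP_Y` for bounded continuous `g`, so the claim is the
duality `∫ |h| dν = sup {∫ h g dν : g ∈ C¹_c, |g| ≤ 1}` for the law `ν = P_Y`. Since `|g| ≤ 1`,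
the supremum is at most `∫ |h| dν`. Conversely, the finite measure `|h| dν` is inner regular, so
there are compact sets `K ⊆ {h ≥ 0}` and `L ⊆ {h < 0}` outside of which `|h| dν` has mass
`< ε/2`; a smooth compactly supported `g` with values in `[-1, 1]`, equal to `1` on `K` and to
`-1` on `L`, then satisfies `∫ h g dν ≥ ∫ |h| dν - ε`.
-/

open MeasureTheory ProbabilityTheory Set Manifold

theorem integral_mul_eq_integral_condExp_mul {Ω : Type*} {m m₀ : MeasurableSpace Ω}
    {μ : Measure Ω} (hm : m ≤ m₀) [SigmaFinite (μ.trim hm)] {X f : Ω → ℝ}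
    (hX : Integrable X μ) (hf : StronglyMeasurable[m] f) {C : ℝ} (hfC : ∀ ω, ‖f ω‖ ≤ C) :
    ∫ ω, X ω * f ω ∂μ = ∫ ω, (μ[X|m]) ω * f ω ∂μ := by
  have hXf : Integrable (X * f) μ :=
    hX.mul_bdd (hf.mono hm).aestronglyMeasurable (ae_of_all _ hfC)
  calc ∫ ω, X ω * f ω ∂μ = ∫ ω, (μ[X * f|m]) ω ∂μ := (integral_condExp hm).symm
    _ = ∫ ω, (μ[X|m]) ω * f ω ∂μ :=
      integral_congr_ae (condExp_mul_of_stronglyMeasurable_right hf hXf hX)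

theorem integral_mul_le_integral_abs {α : Type*} [MeasurableSpace α] {μ : Measure α}
    {h g : α → ℝ} (hh : Integrable h μ) (hg1 : ∀ x, |g x| ≤ 1) :
    ∫ x, h x * g x ∂μ ≤ ∫ x, |h x| ∂μ :=
  (le_abs_self _).trans <| norm_integral_le_of_norm_le hh.abs <| ae_of_all _ fun x => by
    rw [Real.norm_eq_abs, abs_mul]; exact mul_le_of_le_one_right (abs_nonneg _) (hg1 x)

theorem integral_abs_sub_integral_mul_le {α : Type*} [MeasurableSpace α] {μ : Measure α}
    {h g : α → ℝ} (hh : Integrable h μ) (hg : AEStronglyMeasurable g μ) (hg1 : ∀ x, |g x| ≤ 1)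
    {s : Set α} (hs : MeasurableSet s) (hgs : ∀ᵐ x ∂μ, x ∈ s → h x * g x = |h x|) :
    ∫ x, |h x| ∂μ - ∫ x, h x * g x ∂μ ≤ 2 * ∫ x in sᶜ, |h x| ∂μ := by
  have hhg : Integrable (fun x => h x * g x) μ :=
    hh.mul_bdd hg (ae_of_all _ fun x => (Real.norm_eq_abs _).trans_le (hg1 x))
  have hF : Integrable (fun x => |h x| - h x * g x) μ := hh.abs.sub hhg
  have hFs : ∫ x in s, |h x| - h x * g x ∂μ = 0 :=
    setIntegral_eq_zero_of_ae_eq_zero (hgs.mono fun x hx hxs => by rw [hx hxs, sub_self])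
  have hF_le : ∀ x, |h x| - h x * g x ≤ 2 * |h x| := fun x => by
    have : |h x * g x| ≤ |h x| := by
      rw [abs_mul]; exact mul_le_of_le_one_right (abs_nonneg _) (hg1 x)
    linarith [neg_abs_le (h x * g x)]
  calc ∫ x, |h x| ∂μ - ∫ x, h x * g x ∂μ = ∫ x, |h x| - h x * g x ∂μ :=
        (integral_sub hh.abs hhg).symm
    _ = ∫ x in sᶜ, |h x| - h x * g x ∂μ := by rw [← integral_add_compl hs hF, hFs, zero_add]
    _ ≤ ∫ x in sᶜ, 2 * |h x| ∂μ :=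
        setIntegral_mono hF.integrableOn (hh.abs.const_mul 2).integrableOn hF_le
    _ = 2 * ∫ x in sᶜ, |h x| ∂μ := integral_const_mul _ _

theorem exists_isCompact_subset_setIntegral_abs_sdiff_lt {α : Type*} [TopologicalSpace α]
    [PolishSpace α] [MeasurableSpace α] [BorelSpace α] {μ : Measure α} {h : α → ℝ}
    (hh : Integrable h μ) {s : Set α} (hs : MeasurableSet s) {δ : ℝ} (hδ : 0 < δ) :
    ∃ K ⊆ s, IsCompact K ∧ ∫ x in s \ K, |h x| ∂μ < δ := by
  let ν := μ.withDensity fun x => ‖h x‖ₑ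
  have : IsFiniteMeasure ν := isFiniteMeasure_withDensity hh.2.ne
  obtain ⟨K, hKs, hK, hνK⟩ := hs.exists_isCompact_sdiff_lt (measure_ne_top ν s)
    (ENNReal.ofReal_pos.mpr hδ).ne'
  refine ⟨K, hKs, hK, ?_⟩
  have hνsK : ν (s \ K) = ∫⁻ x in s \ K, ‖h x‖ₑ ∂μ :=
    withDensity_apply _ (hs.diff hK.measurableSet)
  change ∫ x in s \ K, ‖h x‖ ∂μ < δ
  rw [integral_norm_eq_lintegral_enorm hh.1.restrict, ← hνsK]
  exact ENNReal.toReal_lt_of_lt_ofReal hνK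

section SmoothDuality

variable {E : Type*} [NormedAddCommGroup E] [NormedSpace ℝ E] [FiniteDimensional ℝ E]

theorem exists_contDiff_hasCompactSupport_eqOn_one_neg_one {K L : Set E}
    (hK : IsCompact K) (hL : IsCompact L) (hKL : Disjoint K L) :
    ∃ g : E → ℝ, ContDiff ℝ (⊤ : ℕ∞) g ∧ HasCompactSupport g ∧ (∀ x, |g x| ≤ 1) ∧
      EqOn g 1 K ∧ EqOn g (-1) L := by
  obtain ⟨f, hfL, hfK, hf01⟩ := exists_contMDiffMap_zero_one_of_isClosed 𝓘(ℝ, E) (n := (⊤ : ℕ∞))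
    hL.isClosed hK.isClosed hKL.symm
  obtain ⟨R, hRpos, hKLR⟩ := (hK.union hL).isBounded.subset_closedBall_lt 0 0
  let χ : ContDiffBump (0 : E) := ⟨R, 2 * R, hRpos, by linarith⟩
  have hχ : ∀ x ∈ K ∪ L, χ x = 1 := fun x hx => χ.one_of_mem_closedBall (hKLR hx)
  refine ⟨fun x => χ x * (2 * f x - 1), ?_, χ.hasCompactSupport.mul_right, fun x => ?_,
    fun x hx => ?_, fun x hx => ?_⟩
  · exact χ.contDiff.mul ((contDiff_const.mul (contMDiff_iff_contDiff.mp f.contMDiff)).sub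
      contDiff_const)
  · have hfx := hf01 x
    rw [abs_mul, abs_of_nonneg χ.nonneg]
    exact mul_le_one₀ χ.le_one (abs_nonneg _)
      (abs_le.mpr ⟨by linarith [hfx.1], by linarith [hfx.2]⟩)
  · norm_num [hχ x (Or.inl hx), hfK hx]
  · simp [hχ x (Or.inr hx), hfL hx]

variable [MeasurableSpace E] [BorelSpace E] {μ : Measure E} {h : E → ℝ}

theorem exists_contDiff_hasCompactSupport_integral_mul_ge (hh : Integrable h μ) {ε : ℝ}
    (hε : 0 < ε) :
    ∃ g : E → ℝ, ContDiff ℝ (⊤ : ℕ∞) g ∧ HasCompactSupport g ∧ (∀ x, |g x| ≤ 1) ∧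
      ∫ x, |h x| ∂μ - ε ≤ ∫ x, h x * g x ∂μ := by
  let B := {x | 0 ≤ hh.1.mk h x}
  have hB : MeasurableSet B := hh.1.stronglyMeasurable_mk.measurable measurableSet_Ici
  obtain ⟨K, hKB, hK, hBK⟩ := exists_isCompact_subset_setIntegral_abs_sdiff_lt hh hB
    (by positivity : 0 < ε / 4)
  obtain ⟨L, hLB, hL, hBL⟩ := exists_isCompact_subset_setIntegral_abs_sdiff_lt hh hB.compl
    (by positivity : 0 < ε / 4)
  obtain ⟨g, hg, hgc, hg1, hgK, hgL⟩ := exists_contDiff_hasCompactSupport_eqOn_one_neg_one hK hL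
    (disjoint_compl_right.mono hKB hLB)
  refine ⟨g, hg, hgc, hg1, ?_⟩
  have hgs : ∀ᵐ x ∂μ, x ∈ K ∪ L → h x * g x = |h x| := by
    filter_upwards [hh.1.ae_eq_mk] with x hx
    rintro (hxK | hxL)
    · rw [hgK hxK, Pi.one_apply, mul_one, abs_of_nonneg (hx ▸ hKB hxK)]
    · rw [hgL hxL, Pi.neg_apply, Pi.one_apply, mul_neg_one,
        abs_of_neg (not_le.mp (hx ▸ hLB hxL))]
  have hcompl : (K ∪ L)ᶜ = (B \ K) ∪ (Bᶜ \ L) := by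
    ext x
    by_cases hx : x ∈ B
    · have hxL : x ∉ L := fun hxL => hLB hxL hx
      simp [hx, hxL]
    · have hxK : x ∉ K := fun hxK => hx (hKB hxK)
      simp [hx, hxK]
  have hsmall : ∫ x in (K ∪ L)ᶜ, |h x| ∂μ < ε / 2 := by
    rw [hcompl, setIntegral_union (disjoint_compl_right.mono sdiff_subset sdiff_subset)
      (hB.compl.diff hL.measurableSet) hh.abs.integrableOn hh.abs.integrableOn]
    linarith
  linarith [integral_abs_sub_integral_mul_le hh (hg.continuous.aestronglyMeasurable) hg1
    (hK.union hL).measurableSet hgs]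

theorem integral_abs_eq_sSup_integral_mul (hh : Integrable h μ) (n : ℕ∞) :
    ∫ x, |h x| ∂μ = sSup {r : ℝ | ∃ g : E → ℝ, ContDiff ℝ n g ∧ HasCompactSupport g ∧
      (∀ x, |g x| ≤ 1) ∧ r = ∫ x, h x * g x ∂μ} := by
  have hbdd : BddAbove {r : ℝ | ∃ g : E → ℝ, ContDiff ℝ n g ∧ HasCompactSupport g ∧
      (∀ x, |g x| ≤ 1) ∧ r = ∫ x, h x * g x ∂μ} := by
    refine ⟨∫ x, |h x| ∂μ, ?_⟩
    rintro r ⟨g, -, -, hg1, rfl⟩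
    exact integral_mul_le_integral_abs hh hg1
  refine le_antisymm (le_of_forall_pos_le_add fun ε hε => ?_) (csSup_le ?_ ?_)
  · obtain ⟨g, hg, hgc, hg1, hge⟩ := exists_contDiff_hasCompactSupport_integral_mul_ge hh hε
    have := le_csSup hbdd ⟨g, hg.of_le (WithTop.coe_le_coe.mpr le_top), hgc, hg1, rfl⟩
    linarith
  · exact ⟨0, 0, contDiff_const, HasCompactSupport.zero, by simp, by simp⟩
  · rintro r ⟨g, -, -, hg1, rfl⟩
    exact integral_mul_le_integral_abs hh hg1

end SmoothDuality

theorem stmt0_general {Ω : Type*} [MeasureSpace Ω] [IsProbabilityMeasure (ℙ : Measure Ω)]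
    {d : ℕ} (X : Ω → ℝ) (Y : Ω → EuclideanSpace ℝ (Fin d))
    (hX : Integrable X ℙ) (hY : Measurable Y) :
    ∫ ω, |MeasureTheory.condExp (MeasurableSpace.comap Y inferInstance) ℙ X ω| ∂ℙ =
      sSup {r : ℝ | ∃ g : EuclideanSpace ℝ (Fin d) → ℝ,
        ContDiff ℝ 1 g ∧ HasCompactSupport g ∧ (∀ x, |g x| ≤ 1) ∧
        r = ∫ ω, X ω * g (Y ω) ∂ℙ} := by
  obtain ⟨h, hh, hZ⟩ := (stronglyMeasurable_condExp (m := MeasurableSpace.comap Y inferInstance)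
    (μ := ℙ) (f := X)).exists_eq_measurable_comp
  have hhint : Integrable h (Measure.map Y ℙ) :=
    (integrable_map_measure hh.aestronglyMeasurable hY.aemeasurable).mpr (hZ ▸ integrable_condExp)
  have hpull : ∀ g : EuclideanSpace ℝ (Fin d) → ℝ, Continuous g → (∀ x, |g x| ≤ 1) →
      ∫ ω, X ω * g (Y ω) ∂ℙ = ∫ x, h x * g x ∂(Measure.map Y ℙ) := fun g hg hg1 => by
    rw [integral_mul_eq_integral_condExp_mul hY.comap_le hX (f := fun ω => g (Y ω))
      (hg.measurable.comp (comap_measurable Y)).stronglyMeasurable (C := 1)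
      (fun ω => (Real.norm_eq_abs _).trans_le (hg1 (Y ω))), hZ]
    exact (integral_map hY.aemeasurable (f := fun x => h x * g x)
      (hh.measurable.mul hg.measurable).aestronglyMeasurable).symm
  have hlhs : ∫ ω, |(ℙ[X|MeasurableSpace.comap Y inferInstance]) ω| ∂ℙ
      = ∫ x, |h x| ∂(Measure.map Y ℙ) := by
    rw [hZ, integral_map hY.aemeasurable hh.measurable.abs.aestronglyMeasurable]
    rfl
  rw [hlhs, integral_abs_eq_sSup_integral_mul hhint 1]
  refine congrArg sSup <| Set.ext fun r => exists_congr fun g => and_congr_right fun hg =>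
    and_congr_right fun _ => and_congr_right fun hg1 => ?_
  rw [hpull g hg.continuous hg1]

/-- For integrable `X : Ω → ℝ` and `Y : Ω → ℝ^d` with absolutely continuous
law, `E|E[X|Y]|` equals the supremum of `E[X g(Y)]` over `g ∈ C¹_c` with `‖g‖_∞ ≤ 1`. -/
theorem stmt0 {Ω : Type*} [MeasureSpace Ω] [IsProbabilityMeasure (ℙ : Measure Ω)]
    {d : ℕ} (X : Ω → ℝ) (Y : Ω → EuclideanSpace ℝ (Fin d))
    (hX : Integrable X ℙ) (hY : Measurable Y)
    (habs : ((ℙ : Measure Ω).map Y) ≪ (volume : Measure (EuclideanSpace ℝ (Fin d)))) :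
    ∫ ω, |MeasureTheory.condExp (MeasurableSpace.comap Y inferInstance) ℙ X ω| ∂ℙ =
      sSup {r : ℝ | ∃ g : EuclideanSpace ℝ (Fin d) → ℝ,
        ContDiff ℝ 1 g ∧ HasCompactSupport g ∧ (∀ x, |g x| ≤ 1) ∧
        r = ∫ ω, X ω * g (Y ω) ∂ℙ} :=
  stmt0_general X Y hX hY
end

section
/- Let F_1,...,F_n be i.i.d. copies of a centered, unit-variance random variable F admitting a square-integrable Stein factor τ_F, and let S_n = n^{-1/2}(F_1+...+F_n). If τ_{S_n}(S_n) = (1/n) E[Σ_{i=1}^n τ_F(F_i) | S_n], then E[(1 − τ_{S_n}(S_n))^2] ≤ E[(1 − τ_F(F))^2]/n. -/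
/-!
Put `Y i = 1 - τ_F(F_i)`, centred i.i.d. variables. Then `1 - τ_{S_n}(S_n)` is the conditional
expectation given `S_n` of their sample mean, so conditional Jensen bounds its second moment by
that of the sample mean, which by independence is `E[(1 - τ_F(F))²] / n`.
-/

open MeasureTheory ProbabilityTheory

theorem integral_condExp_sq_le {α : Type*} {m m₀ : MeasurableSpace α} {μ : Measure α}
    {f : α → ℝ} (hf : Integrable (fun x => f x ^ 2) μ) :
    ∫ x, μ[f | m] x ^ 2 ∂μ ≤ ∫ x, f x ^ 2 ∂μ := by
  have h := integral_norm_condExp_rpow_le (m := m) one_le_two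
    (hf.congr (.of_forall fun x => by simp [sq_abs]) :
      Integrable (fun x => ‖f x‖ ^ (2 : ℝ)) μ)
  simpa [sq_abs] using h

theorem condExp_const_sub {α : Type*} {m m₀ : MeasurableSpace α} {μ : Measure α}
    [IsFiniteMeasure μ] (hm : m ≤ m₀) (c : ℝ) {f : α → ℝ} (hf : Integrable f μ) :
    μ[fun x => c - f x | m] =ᵐ[μ] fun x => c - μ[f | m] x := by
  filter_upwards [condExp_sub (integrable_const c) hf m] with x hx
  rwa [Pi.sub_apply, condExp_const hm] at hx

section Moments

variable {Ω ι : Type*} {mΩ : MeasurableSpace Ω} {μ : Measure Ω}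

theorem integral_sum_sq_of_pairwise_indepFun [IsFiniteMeasure μ] {s : Finset ι}
    {Y : ι → Ω → ℝ} (hY : ∀ i ∈ s, MemLp (Y i) 2 μ) (hmean : ∀ i ∈ s, μ[Y i] = 0)
    (hindep : Set.Pairwise ↑s fun i j => Y i ⟂ᵢ[μ] Y j) :
    ∫ ω, (∑ i ∈ s, Y i ω) ^ 2 ∂μ = ∑ i ∈ s, ∫ ω, Y i ω ^ 2 ∂μ := by
  have hsum_mean : ∫ ω, ∑ i ∈ s, Y i ω ∂μ = 0 := by
    rw [integral_finsetSum s fun i hi => (hY i hi).integrable one_le_two]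
    exact Finset.sum_eq_zero hmean
  have h := IndepFun.variance_sum hY hindep
  rw [Finset.sum_fn, variance_of_integral_eq_zero
    (memLp_finsetSum s hY).aestronglyMeasurable.aemeasurable hsum_mean] at h
  rw [h]
  exact Finset.sum_congr rfl fun i hi =>
    variance_of_integral_eq_zero (hY i hi).aestronglyMeasurable.aemeasurable (hmean i hi)

theorem integral_sq_sample_mean_of_iIndepFun [IsProbabilityMeasure μ] [Fintype ι]
    {Y : ι → Ω → ℝ} (i₀ : ι) (hY : MemLp (Y i₀) 2 μ) (hmean : μ[Y i₀] = 0)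
    (hindep : iIndepFun Y μ) (hident : ∀ i, IdentDistrib (Y i) (Y i₀) μ μ) :
    ∫ ω, ((∑ i, Y i ω) / Fintype.card ι) ^ 2 ∂μ = (∫ ω, Y i₀ ω ^ 2 ∂μ) / Fintype.card ι := by
  have hsq : ∀ i, ∫ ω, Y i ω ^ 2 ∂μ = ∫ ω, Y i₀ ω ^ 2 ∂μ := fun i =>
    ((hident i).comp (measurable_id.pow_const 2)).integral_eq
  have hsum := integral_sum_sq_of_pairwise_indepFun (s := Finset.univ)
    (fun i _ => (hident i).symm.memLp_snd hY)
    (fun i _ => (hident i).integral_eq.trans hmean)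
    (fun i _ j _ hij => hindep.indepFun hij)
  simp only [div_pow, integral_div, hsum, hsq, Finset.sum_const, Finset.card_univ, nsmul_eq_mul]
  have : Nonempty ι := ⟨i₀⟩
  field_simp

end Moments

theorem stmt4_general {Ω : Type*} [MeasureSpace Ω] [IsProbabilityMeasure (ℙ : Measure Ω)]
    (n : ℕ) [NeZero n] (F : Fin n → Ω → ℝ) (hFm : ∀ i, Measurable (F i))
    (hindep : iIndepFun F ℙ)
    (hident : ∀ i, IdentDistrib (F i) (F 0) ℙ ℙ)
    (τ : ℝ → ℝ) (hτm : Measurable τ)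
    (hτ2 : Integrable (fun ω => (τ (F 0 ω)) ^ 2) ℙ)
    (hτmean : ∫ ω, τ (F 0 ω) ∂ℙ = 1)
    (S : Ω → ℝ) (hS : S = fun ω => (∑ i, F i ω) / Real.sqrt n)
    (τS : Ω → ℝ)
    (hτS : τS =ᵐ[ℙ] MeasureTheory.condExp (MeasurableSpace.comap S inferInstance) ℙ
      (fun ω => (∑ i, τ (F i ω)) / (n : ℝ))) :
    ∫ ω, (1 - τS ω) ^ 2 ∂ℙ ≤ (∫ ω, (1 - τ (F 0 ω)) ^ 2 ∂ℙ) / (n : ℝ) := by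
  have hm : MeasurableSpace.comap S inferInstance ≤ MeasureSpace.toMeasurableSpace := by
    subst hS
    exact ((Finset.measurable_sum _ fun i _ => hFm i).div_const _).comap_le
  set Y : Fin n → Ω → ℝ := fun i ω => 1 - τ (F i ω)
  have hτF : MemLp (fun ω => τ (F 0 ω)) 2 ℙ :=
    (memLp_two_iff_integrable_sq (hτm.comp (hFm 0)).aestronglyMeasurable).2 hτ2
  have hτFi : ∀ i, Integrable (fun ω => τ (F i ω)) ℙ := fun i =>
    ((hident i).comp hτm).symm.integrable_snd (hτF.integrable one_le_two)
  have hYident : ∀ i, IdentDistrib (Y i) (Y 0) ℙ ℙ := fun i =>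
    (hident i).comp (measurable_const.sub hτm)
  have hY0 : MemLp (Y 0) 2 ℙ := (memLp_const 1).sub hτF
  have hYmean : ∫ ω, Y 0 ω ∂ℙ = 0 := by
    simp [Y, integral_sub (integrable_const 1) (hτFi 0), hτmean]
  set T : Ω → ℝ := fun ω => (∑ i, Y i ω) / n
  have hcond : (fun ω => 1 - τS ω) =ᵐ[ℙ] ℙ[T | MeasurableSpace.comap S inferInstance] := by
    have hT : T = fun ω => 1 - (∑ i, τ (F i ω)) / n := by
      funext ω
      simp [T, Y, Finset.sum_sub_distrib, sub_div]
    rw [hT]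
    filter_upwards [hτS, condExp_const_sub hm 1
      ((integrable_finsetSum _ fun i _ => hτFi i).div_const n)] with ω h1 h2
    rw [h1, h2]
  calc ∫ ω, (1 - τS ω) ^ 2 ∂ℙ = ∫ ω, ℙ[T | MeasurableSpace.comap S inferInstance] ω ^ 2 ∂ℙ :=
        integral_congr_ae (hcond.fun_comp (· ^ 2))
    _ ≤ ∫ ω, T ω ^ 2 ∂ℙ := integral_condExp_sq_le <| by
      simpa only [T, div_pow] using ((memLp_finsetSum _ fun i _ =>
        (hYident i).symm.memLp_snd hY0).integrable_sq).div_const ((n : ℝ) ^ 2)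
    _ = (∫ ω, Y 0 ω ^ 2 ∂ℙ) / n := by
      simpa using integral_sq_sample_mean_of_iIndepFun (Y := Y) 0 hY0 hYmean
        (hindep.comp _ fun _ => measurable_const.sub hτm) hYident

/-- for i.i.d. copies `F_1, ..., F_n` of a centered unit-variance `F` with
square-integrable Stein factor `τ_F`, and `S_n = n^{-1/2} Σ F_i`, if
`τ_{S_n}(S_n) = (1/n) E[Σ τ_F(F_i) | S_n]` then
`E[(1 - τ_{S_n}(S_n))²] ≤ E[(1 - τ_F(F))²]/n`. -/
theorem stmt4 {Ω : Type*} [MeasureSpace Ω] [IsProbabilityMeasure (ℙ : Measure Ω)]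
    (n : ℕ) [NeZero n] (F : Fin n → Ω → ℝ) (hFm : ∀ i, Measurable (F i))
    (hindep : iIndepFun F ℙ)
    (hident : ∀ i, IdentDistrib (F i) (F 0) ℙ ℙ)
    (hmean : ∫ ω, F 0 ω ∂ℙ = 0) (hvar : ∫ ω, (F 0 ω) ^ 2 ∂ℙ = 1)
    (τ : ℝ → ℝ) (hτm : Measurable τ)
    (hτ2 : Integrable (fun ω => (τ (F 0 ω)) ^ 2) ℙ)
    (hstein : ∀ g : ℝ → ℝ, ContDiff ℝ 1 g → HasCompactSupport g →
      ∫ ω, F 0 ω * g (F 0 ω) ∂ℙ = ∫ ω, τ (F 0 ω) * deriv g (F 0 ω) ∂ℙ)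
    (hτmean : ∫ ω, τ (F 0 ω) ∂ℙ = 1)
    (S : Ω → ℝ) (hS : S = fun ω => (∑ i, F i ω) / Real.sqrt n)
    (τS : Ω → ℝ)
    (hτS : τS =ᵐ[ℙ] MeasureTheory.condExp (MeasurableSpace.comap S inferInstance) ℙ
      (fun ω => (∑ i, τ (F i ω)) / (n : ℝ))) :
    ∫ ω, (1 - τS ω) ^ 2 ∂ℙ ≤ (∫ ω, (1 - τ (F 0 ω)) ^ 2 ∂ℙ) / (n : ℝ) :=
  stmt4_general n F hFm hindep hident τ hτm hτ2 hτmean S hS τS hτS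
end

section
/- Let F = (F_1,...,F_d) with each F_i in a finite sum ⊕_{k=0}^q C_k of Wiener chaoses. If E[det Γ(F)] > 0 (so that F has a density f on R^d), then the differential entropy of F is finite: Ent(F) < ∞. Specifically, if f ∈ L^{1+1/n}(R^d) for some n, then ∫ f log f ≤ n(∫ f^{1+1/n} − 1) < ∞. -/
/-!
Taking logarithms of `u ^ (1 / n)` in `log v ≤ v - 1` gives `log u ≤ n (u ^ (1 / n) - 1)`, hence
`f log f ≤ n (f ^ (1 + 1 / n) - f)` pointwise. The right-hand side is integrable as soon as
`f ∈ L¹ ∩ L^{1 + 1/n}`, and a probability density integrates to `1`.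
-/

open MeasureTheory ProbabilityTheory

namespace Real

lemma mul_log_le_mul_rpow_sub {x t : ℝ} (hx : 0 ≤ x) (ht : 0 < t) :
    x * log x ≤ t * (x ^ (1 + 1 / t) - x) := by
  rcases hx.eq_or_lt with rfl | hx
  · rw [zero_rpow (by positivity)]
    simp
  have hlog : log x ≤ t * (x ^ (1 / t) - 1) := by
    have h := log_le_sub_one_of_pos (rpow_pos_of_pos hx (1 / t))
    rw [log_rpow hx] at h
    calc log x = t * (1 / t * log x) := by field_simp
      _ ≤ t * (x ^ (1 / t) - 1) := by gcongr
  calc x * log x ≤ x * (t * (x ^ (1 / t) - 1)) := by gcongr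
    _ = t * (x ^ (1 + 1 / t) - x) := by rw [rpow_add hx, rpow_one]; ring

end Real

namespace MeasureTheory

variable {α : Type*} [MeasurableSpace α] {μ : Measure α} {f : α → ℝ}

lemma MemLp.integrable_rpow_of_nonneg {p : ℝ} (hf : MemLp f (ENNReal.ofReal p) μ)
    (hfnn : 0 ≤ᵐ[μ] f) (hp : 0 < p) : Integrable (fun x => f x ^ p) μ := by
  have h := hf.integrable_norm_rpow (by simpa using hp) ENNReal.ofReal_ne_top
  rw [ENNReal.toReal_ofReal hp.le] at h
  refine h.congr ?_
  filter_upwards [hfnn] with x hx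
  rw [Real.norm_of_nonneg hx]

lemma integrable_and_integral_eq_one_of_isProbabilityMeasure_withDensity
    (hf : AEStronglyMeasurable f μ) (hfnn : 0 ≤ᵐ[μ] f)
    (hprob : IsProbabilityMeasure (μ.withDensity fun x => ENNReal.ofReal (f x))) :
    Integrable f μ ∧ ∫ x, f x ∂μ = 1 := by
  have hone : ∫⁻ x, ENNReal.ofReal (f x) ∂μ = 1 := by
    simpa [withDensity_apply _ MeasurableSet.univ] using hprob.measure_univ
  refine ⟨⟨hf, ?_⟩, ?_⟩
  · rw [hasFiniteIntegral_iff_ofReal hfnn, hone]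
    exact ENNReal.one_lt_top
  · rw [integral_eq_lintegral_of_nonneg_ae hfnn hf, hone, ENNReal.toReal_one]

variable {t : ℝ}

lemma lintegral_ofReal_mul_log_lt_top (hfnn : 0 ≤ᵐ[μ] f) (ht : 0 < t) (hf : Integrable f μ)
    (hft : Integrable (fun x => f x ^ (1 + 1 / t)) μ) :
    ∫⁻ x, ENNReal.ofReal (f x * Real.log (f x)) ∂μ < ⊤ :=
  calc ∫⁻ x, ENNReal.ofReal (f x * Real.log (f x)) ∂μ
      ≤ ∫⁻ x, ENNReal.ofReal (t * (f x ^ (1 + 1 / t) - f x)) ∂μ :=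
        lintegral_mono_ae <| hfnn.mono fun _ hx =>
          ENNReal.ofReal_le_ofReal (Real.mul_log_le_mul_rpow_sub hx ht)
    _ < ⊤ := ((hft.sub hf).const_mul t).lintegral_lt_top

lemma integral_mul_log_le (hfnn : 0 ≤ᵐ[μ] f) (ht : 0 < t) (hf : Integrable f μ)
    (hft : Integrable (fun x => f x ^ (1 + 1 / t)) μ)
    (hlog : Integrable (fun x => f x * Real.log (f x)) μ) :
    ∫ x, f x * Real.log (f x) ∂μ ≤ t * ((∫ x, f x ^ (1 + 1 / t) ∂μ) - ∫ x, f x ∂μ) := by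
  rw [← integral_sub hft hf, ← integral_const_mul]
  exact integral_mono_ae hlog ((hft.sub hf).const_mul t)
    (hfnn.mono fun _ hx => Real.mul_log_le_mul_rpow_sub hx ht)

end MeasureTheory

theorem stmt18_general {Ω : Type*} [MeasureSpace Ω] [IsProbabilityMeasure (ℙ : Measure Ω)]
    {d : ℕ} (F : Ω → Fin d → ℝ) (hFm : Measurable F)
    (f : (Fin d → ℝ) → ℝ) (hfnn : ∀ x, 0 ≤ f x)
    (hf : (ℙ : Measure Ω).map F = volume.withDensity (fun x => ENNReal.ofReal (f x)))
    (n : ℕ) (hn : 1 ≤ n)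
    (hLp : MemLp f (ENNReal.ofReal (1 + 1 / (n : ℝ))) volume) :
    (∫⁻ x : Fin d → ℝ, ENNReal.ofReal (f x * Real.log (f x)) < ⊤) ∧
      (Integrable (fun x : Fin d → ℝ => f x * Real.log (f x)) volume →
        ∫ x : Fin d → ℝ, f x * Real.log (f x) ≤
          (n : ℝ) * ((∫ x : Fin d → ℝ, f x ^ ((1 : ℝ) + 1 / (n : ℝ))) - 1)) := by
  have hn : (0 : ℝ) < n := by exact_mod_cast hn
  have hfnn : 0 ≤ᵐ[volume] f := Filter.Eventually.of_forall hfnn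
  obtain ⟨hint, hone⟩ := integrable_and_integral_eq_one_of_isProbabilityMeasure_withDensity
    hLp.aestronglyMeasurable hfnn (hf ▸ Measure.isProbabilityMeasure_map hFm.aemeasurable)
  have hpow := hLp.integrable_rpow_of_nonneg hfnn (by positivity)
  refine ⟨lintegral_ofReal_mul_log_lt_top hfnn hn hint hpow, fun hlog => ?_⟩
  simpa [hone] using integral_mul_log_le hfnn hn hint hpow hlog

/-- if a `d`-dimensional random vector `F` has a density `f` belonging to
`L^{1+1/n}(ℝ^d)` for some `n ≥ 1` (as is the case for vectors of chaotic random
variables with `E[det Γ(F)] > 0`), then its differential entropy is finite: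
`∫ f log f < ∞`, and indeed `∫ f log f ≤ n(∫ f^{1+1/n} - 1)`. -/
theorem stmt18 {Ω : Type*} [MeasureSpace Ω] [IsProbabilityMeasure (ℙ : Measure Ω)]
    {d : ℕ} (F : Ω → Fin d → ℝ) (hFm : Measurable F)
    (f : (Fin d → ℝ) → ℝ) (hfm : Measurable f) (hfnn : ∀ x, 0 ≤ f x)
    (hf : (ℙ : Measure Ω).map F = volume.withDensity (fun x => ENNReal.ofReal (f x)))
    (n : ℕ) (hn : 1 ≤ n)
    (hLp : MemLp f (ENNReal.ofReal (1 + 1 / (n : ℝ))) volume) :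
    (∫⁻ x : Fin d → ℝ, ENNReal.ofReal (f x * Real.log (f x)) < ⊤) ∧
      (Integrable (fun x : Fin d → ℝ => f x * Real.log (f x)) volume →
        ∫ x : Fin d → ℝ, f x * Real.log (f x) ≤
          (n : ℝ) * ((∫ x : Fin d → ℝ, f x ^ ((1 : ℝ) + 1 / (n : ℝ))) - 1)) :=
  stmt18_general F hFm f hfnn hf n hn hLp
end
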